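/- For every integer k ≥ 1, E[tr(R^{2k})] ≤ (2k)^{2k−2}·n^{k+1}. -/

import Mathlib

def sgn (b : Bool) : ℝ := if b then 1 else -1

noncomputable def Pr {n : ℕ} (P : (Sym2 (Fin n) → Bool) → Prop) : ℝ := by
  classical
  exact ((Finset.univ.filter P).card : ℝ) / (Fintype.card (Sym2 (Fin n) → Bool))

noncomputable def Ex {n : ℕ} (f : (Sym2 (Fin n) → Bool) → ℝ) : ℝ :=
  (∑ g : Sym2 (Fin n) → Bool, f g) / (Fintype.card (Sym2 (Fin n) → Bool))

noncomputable def Rmat {n : ℕ} (g : Sym2 (Fin n) → Bool) : Matrix (Fin n) (Fin n) ℝ :=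
  Matrix.of fun i j => if i = j then 0 else sgn (g s(i, j))

def cyc {m : ℕ} (j : Fin m) : Fin m := ⟨((j : ℕ) + 1) % m, Nat.mod_lt _ j.pos⟩

/-!
Expanding the trace, `E tr(R^{2k})` is the sum over closed walks `w` of length `2k` of
`E ∏ R(w t, w (t + 1))`. Flipping the sign of an edge traversed an odd number of times shows that
this expectation vanishes unless the walk has no loops and traverses each edge an even number of
times, and it is at most `1` anyway. Such a walk uses at most `k` distinct edges, hence visits at
most `k + 1` vertices. It is determined by the map sending each position to the first position
visiting the same vertex (forced at positions `0` and `1`, so at most `(2k)^(2k-2)` choices)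
together with its vertices at first-visit positions (at most `n^(k+1)` choices).
-/

open Finset

theorem cyc_last (m : ℕ) : cyc (Fin.last m) = 0 := by
  ext; simp [cyc]

theorem cyc_castSucc {m : ℕ} (t : Fin m) : cyc t.castSucc = t.succ := by
  ext; simp [cyc, Nat.mod_eq_of_lt (Nat.succ_lt_succ t.isLt)]

theorem cons_cyc {ι : Type*} {m : ℕ} (i : ι) (w : Fin m → ι) (t : Fin (m + 1)) :
    (Fin.cons i w : Fin (m + 1) → ι) (cyc t) = Fin.snoc (α := fun _ => ι) w i t := by
  induction t using Fin.lastCases with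
  | last => simp [cyc_last]
  | cast s => simp [cyc_castSucc]

namespace Matrix

variable {ι R : Type*} [Fintype ι] [DecidableEq ι] [CommSemiring R]

theorem pow_succ_apply_eq_sum_prod (A : Matrix ι ι R) (m : ℕ) (i j : ι) :
    (A ^ (m + 1)) i j = ∑ w : Fin m → ι,
      ∏ t, A (Fin.cons (α := fun _ => ι) i w t) (Fin.snoc (α := fun _ => ι) w j t) := by
  induction m generalizing i with
  | zero => simp [Fin.snoc]
  | succ m ih =>
    rw [pow_succ', mul_apply, ← (Fin.consEquiv _).sum_comp, Fintype.sum_prod_type]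
    refine sum_congr rfl fun x _ => ?_
    rw [ih, mul_sum]
    refine sum_congr rfl fun w _ => ?_
    simp [Fin.consEquiv, Fin.prod_univ_succ, ← Fin.cons_snoc_eq_snoc_cons]

theorem trace_pow_eq_sum_prod_cyc (A : Matrix ι ι R) {m : ℕ} (hm : 0 < m) :
    (A ^ m).trace = ∑ u : Fin m → ι, ∏ t, A (u t) (u (cyc t)) := by
  obtain ⟨m, rfl⟩ := Nat.exists_eq_add_one_of_ne_zero hm.ne'
  simp only [trace, diag, pow_succ_apply_eq_sum_prod, ← (Fin.consEquiv _).sum_comp,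
    Fintype.sum_prod_type]
  simp [Fin.consEquiv, cons_cyc]

end Matrix

@[simp] theorem abs_sgn (b : Bool) : |sgn b| = 1 := by
  cases b <;> simp [sgn]

@[simp] theorem sgn_not (b : Bool) : sgn (!b) = -sgn b := by
  cases b <;> simp [sgn]

theorem sum_prod_sgn_eq_zero_of_odd {β ι : Type*} [Fintype β] [DecidableEq β] [Fintype ι]
    (e : ι → β) {b : β} (hb : Odd #{i | e i = b}) :
    ∑ g : β → Bool, ∏ i, sgn (g (e i)) = 0 := by
  set flip : (β → Bool) → β → Bool := fun g => Function.update g b (!g b)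
  have hflip : Function.Involutive flip := by
    intro g
    ext x
    by_cases hx : x = b <;> simp [flip, hx]
  have hneg (g : β → Bool) : ∏ i, sgn (flip g (e i)) = -∏ i, sgn (g (e i)) := by
    have (i : ι) : sgn (flip g (e i)) = (if e i = b then -1 else 1) * sgn (g (e i)) := by
      by_cases h : e i = b <;> simp [flip, h]
    simp only [this, prod_mul_distrib, prod_ite, prod_const, one_pow, mul_one, hb.neg_one_pow,
      neg_one_mul]
  have := Equiv.sum_comp (hflip.toPerm _) (fun g : β → Bool => ∏ i, sgn (g (e i)))
  simp only [Function.Involutive.coe_toPerm, hneg, sum_neg_distrib] at this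
  linarith

theorem card_image_range_succ_le_card_image_sym2_add_one {α : Type*} [DecidableEq α]
    (u : ℕ → α) (m : ℕ) :
    #((range (m + 1)).image u) ≤ #((range m).image fun i => s(u i, u (i + 1))) + 1 := by
  induction m with
  | zero => simp
  | succ m ih =>
    have hsteps : (range (m + 1)).image (fun i => s(u i, u (i + 1))) =
        insert s(u m, u (m + 1)) ((range m).image fun i => s(u i, u (i + 1))) := by
      rw [range_add_one, image_insert]
    rw [range_add_one (n := m + 1), image_insert, hsteps]
    by_cases hnew : u (m + 1) ∈ (range (m + 1)).image u
    · rw [insert_eq_of_mem hnew]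
      exact ih.trans (by gcongr; exact subset_insert _ _)
    · have hedge : s(u m, u (m + 1)) ∉ (range m).image fun i => s(u i, u (i + 1)) := by
        simp only [mem_image, mem_range, not_exists, not_and]
        intro i hi heq
        have hmem := heq ▸ Sym2.mem_mk_right (u m) (u (m + 1))
        rcases Sym2.mem_iff.mp hmem with h | h <;>
          exact hnew (mem_image.mpr ⟨_, mem_range.mpr (by omega), h.symm⟩)
      rw [card_insert_of_notMem hnew, card_insert_of_notMem hedge]
      omega

section ClosedWalk

variable {α : Type*} [DecidableEq α] {m : ℕ}

def stepEdge (w : Fin m → α) (t : Fin m) : Sym2 α := s(w t, w (cyc t))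

theorem card_image_le_card_image_stepEdge_add_one (w : Fin m → α) :
    #(univ.image w) ≤ #(univ.image (stepEdge w)) + 1 := by
  obtain _ | l := m
  · simp
  set u : ℕ → α := fun i => w ⟨i % (l + 1), Nat.mod_lt _ l.succ_pos⟩
  have hvert : univ.image w = (range (l + 1)).image u := by
    ext v
    simp only [mem_image, mem_univ, true_and, mem_range, u]
    exact ⟨fun ⟨t, ht⟩ => ⟨t, t.isLt, by simpa [Nat.mod_eq_of_lt t.isLt]⟩,
      fun ⟨i, _, hi⟩ => ⟨_, hi⟩⟩
  have hedge : (range l).image (fun i => s(u i, u (i + 1))) ⊆ univ.image (stepEdge w) := by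
    intro e he
    obtain ⟨i, hi, rfl⟩ := mem_image.mp he
    refine mem_image.mpr ⟨⟨i, by simp at hi; omega⟩, mem_univ _, ?_⟩
    simp [stepEdge, cyc, u, Nat.mod_eq_of_lt (show i < l + 1 by simp at hi; omega)]
  rw [hvert]
  exact (card_image_range_succ_le_card_image_sym2_add_one u l).trans (by gcongr)

structure IsEvenClosedWalk (w : Fin m → α) : Prop where
  ne_cyc : ∀ t, w t ≠ w (cyc t)
  even_card_stepEdge : ∀ t, Even #{s | stepEdge w s = stepEdge w t}

instance (w : Fin m → α) : Decidable (IsEvenClosedWalk w) :=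
  decidable_of_iff ((∀ t, w t ≠ w (cyc t)) ∧ ∀ t, Even #{s | stepEdge w s = stepEdge w t})
    ⟨fun h => ⟨h.1, h.2⟩, fun h => ⟨h.1, h.2⟩⟩

theorem IsEvenClosedWalk.two_mul_card_image_stepEdge_le {w : Fin m → α}
    (hw : IsEvenClosedWalk w) : 2 * #(univ.image (stepEdge w)) ≤ m := by
  simpa using mul_card_image_le_card (f := stepEdge w) univ 2 fun e he => by
    obtain ⟨t, -, rfl⟩ := mem_image.mp he
    obtain ⟨c, hc⟩ := hw.even_card_stepEdge t
    have : 0 < #{s | stepEdge w s = stepEdge w t} := card_pos.mpr ⟨t, by simp⟩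
    omega

theorem IsEvenClosedWalk.card_image_le {w : Fin m → α} (hw : IsEvenClosedWalk w) :
    #(univ.image w) ≤ m / 2 + 1 := by
  have := hw.two_mul_card_image_stepEdge_le
  have := card_image_le_card_image_stepEdge_add_one w
  omega

def firstIndex (w : Fin m → α) (t : Fin m) : Fin m :=
  (univ.filter fun s => w s = w t).min' ⟨t, by simp⟩

section firstIndex

variable (w : Fin m → α)

theorem apply_firstIndex (t : Fin m) : w (firstIndex w t) = w t :=
  (mem_filter.mp (min'_mem (univ.filter fun s => w s = w t) _)).2

theorem firstIndex_le {s t : Fin m} (h : w s = w t) : firstIndex w t ≤ s :=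
  min'_le _ _ (by simp [h])

theorem firstIndex_eq_firstIndex_iff {s t : Fin m} :
    firstIndex w s = firstIndex w t ↔ w s = w t := by
  refine ⟨fun h => by simpa only [apply_firstIndex] using congrArg w h, fun h => ?_⟩
  simp only [firstIndex, h]

theorem firstIndex_eq_self_iff {t : Fin m} : firstIndex w t = t ↔ ∀ s < t, w s ≠ w t := by
  refine ⟨fun h s hs hst => (h ▸ firstIndex_le w hst).not_gt hs, fun h => ?_⟩
  refine le_antisymm (firstIndex_le w rfl) (not_lt.mp fun hlt => h _ hlt ?_)
  exact apply_firstIndex w t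

theorem card_image_firstIndex : #(univ.image (firstIndex w)) = #(univ.image w) := by
  have hinj : Set.InjOn w (univ.image (firstIndex w)) := by
    intro a ha b hb h
    obtain ⟨s, -, rfl⟩ := mem_image.mp ha
    obtain ⟨t, -, rfl⟩ := mem_image.mp hb
    rw [firstIndex_eq_firstIndex_iff, ← apply_firstIndex w s, ← apply_firstIndex w t, h]
  rw [← card_image_of_injOn hinj, image_image]
  exact congrArg card (image_congr fun t _ => apply_firstIndex w t)

end firstIndex

theorem IsEvenClosedWalk.firstIndex_eq {w w' : Fin m → α} (hw : IsEvenClosedWalk w)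
    (hw' : IsEvenClosedWalk w')
    (h : ∀ t : Fin m, 2 ≤ t.val → firstIndex w t = firstIndex w' t) :
    firstIndex w = firstIndex w' := by
  have hsmall {v : Fin m → α} (hv : IsEvenClosedWalk v) (t : Fin m) (ht : t.val < 2) :
      firstIndex v t = t := by
    rw [firstIndex_eq_self_iff]
    intro s hs
    have hs0 : s.val = 0 := by omega
    have ht1 : t = cyc s := by
      ext
      simp only [cyc, hs0, zero_add]
      rw [Nat.mod_eq_of_lt (by omega)]
      omega
    exact ht1 ▸ hv.ne_cyc s
  ext1 t
  by_cases ht : 2 ≤ t.val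
  · exact h t ht
  · rw [hsmall hw t (by omega), hsmall hw' t (by omega)]

theorem card_filter_firstIndex_eq_le [Fintype α] (σ : Fin m → Fin m) :
    #{w : Fin m → α | firstIndex w = σ} ≤ Fintype.card α ^ #(univ.image σ) := by
  have hinj : Set.InjOn (fun (w : Fin m → α) (s : univ.image σ) => w s)
      (univ.filter fun w : Fin m → α => firstIndex w = σ : Finset _) := by
    intro w hw w' hw' h
    ext1 t
    have hσ {v : Fin m → α} (hv : v ∈ univ.filter fun w => firstIndex w = σ) :
        v (σ t) = v t :=
      (mem_filter.mp hv).2 ▸ apply_firstIndex v t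
    rw [← hσ hw, ← hσ hw']
    exact congrFun h ⟨σ t, mem_image_of_mem σ (mem_univ t)⟩
  simpa only [card_univ, Fintype.card_fun, Fintype.card_coe] using
    card_le_card_of_injOn _ (fun _ _ => mem_univ _) hinj

theorem card_filter_isEvenClosedWalk_le [Fintype α] (hm : 0 < m) :
    #{w : Fin m → α | IsEvenClosedWalk w} ≤ Fintype.card α ^ (m / 2 + 1) * m ^ (m - 2) := by
  -- positions `0` and `1` are always first visits, see `IsEvenClosedWalk.firstIndex_eq`
  set shape : (Fin m → α) → Fin (m - 2) → Fin m :=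
    fun w s => firstIndex w ⟨s + 2, by omega⟩
  have hfiber : ∀ a ∈ (univ.filter IsEvenClosedWalk).image shape,
      #{w ∈ univ.filter IsEvenClosedWalk | shape w = a} ≤ Fintype.card α ^ (m / 2 + 1) := by
    intro a ha
    obtain ⟨w₀, hw₀, rfl⟩ := mem_image.mp ha
    simp only [mem_filter, mem_univ, true_and] at hw₀
    have hsub : (univ.filter IsEvenClosedWalk).filter (fun w => shape w = shape w₀) ⊆
        univ.filter fun w : Fin m → α => firstIndex w = firstIndex w₀ := by
      intro w hw
      simp only [mem_filter, mem_univ, true_and] at hw ⊢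
      refine hw.1.firstIndex_eq hw₀ fun t ht => ?_
      have ht2 : (⟨t - 2 + 2, by omega⟩ : Fin m) = t := by ext; simp only; omega
      simpa only [shape, ht2] using congrFun hw.2 ⟨t - 2, by omega⟩
    calc _ ≤ _ := card_le_card hsub
      _ ≤ Fintype.card α ^ #(univ.image (firstIndex w₀)) := card_filter_firstIndex_eq_le _
      _ ≤ Fintype.card α ^ (m / 2 + 1) := by
        rw [card_image_firstIndex]
        exact Nat.pow_le_pow_right (Fintype.card_pos_iff.mpr ⟨w₀ ⟨0, hm⟩⟩)
          hw₀.card_image_le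
  calc _ ≤ Fintype.card α ^ (m / 2 + 1) * #((univ.filter IsEvenClosedWalk).image shape) :=
        card_le_mul_card_image _ _ hfiber
    _ ≤ Fintype.card α ^ (m / 2 + 1) * m ^ (m - 2) := by
      gcongr
      exact (card_le_univ _).trans_eq (by simp)

end ClosedWalk

section RandomGraph

variable {n : ℕ}

theorem Ex_le_of_forall_le {f : (Sym2 (Fin n) → Bool) → ℝ} {c : ℝ} (h : ∀ g, f g ≤ c) :
    Ex f ≤ c := by
  rw [Ex, div_le_iff₀ (by simp), mul_comm, ← nsmul_eq_mul, ← card_univ]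
  exact sum_le_card_nsmul _ _ _ fun g _ => h g

theorem Ex_sum {ι : Type*} (s : Finset ι) (f : ι → (Sym2 (Fin n) → Bool) → ℝ) :
    Ex (fun g => ∑ i ∈ s, f i g) = ∑ i ∈ s, Ex (f i) := by
  simp only [Ex, sum_comm (s := univ), sum_div]

theorem Rmat_apply_self (g : Sym2 (Fin n) → Bool) (i : Fin n) : Rmat g i i = 0 := by
  simp [Rmat]

theorem Rmat_apply_of_ne (g : Sym2 (Fin n) → Bool) {i j : Fin n} (h : i ≠ j) :
    Rmat g i j = sgn (g s(i, j)) := by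
  simp [Rmat, h]

theorem abs_Rmat_apply_le_one (g : Sym2 (Fin n) → Bool) (i j : Fin n) : |Rmat g i j| ≤ 1 := by
  by_cases h : i = j
  · simp [h, Rmat_apply_self]
  · simp [Rmat_apply_of_ne g h]

theorem Ex_prod_Rmat_cyc_le {m : ℕ} (w : Fin m → Fin n) :
    Ex (fun g => ∏ t, Rmat g (w t) (w (cyc t))) ≤ if IsEvenClosedWalk w then 1 else 0 := by
  split_ifs with hw
  · refine Ex_le_of_forall_le fun g => (le_abs_self _).trans ?_
    rw [abs_prod]
    exact prod_le_one (fun _ _ => abs_nonneg _) fun t _ => abs_Rmat_apply_le_one g _ _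
  · suffices ∑ g, ∏ t, Rmat g (w t) (w (cyc t)) = 0 by simp [Ex, this]
    by_cases hloop : ∃ t, w t = w (cyc t)
    · obtain ⟨t, ht⟩ := hloop
      exact sum_eq_zero fun g _ => prod_eq_zero (mem_univ t) (ht ▸ Rmat_apply_self g _)
    · simp only [not_exists] at hloop
      obtain ⟨t, ht⟩ : ∃ t, ¬Even #{s | stepEdge w s = stepEdge w t} := by
        by_contra! h
        exact hw ⟨hloop, h⟩
      simp_rw [Rmat_apply_of_ne _ (hloop _)]
      exact sum_prod_sgn_eq_zero_of_odd (stepEdge w) (Nat.not_even_iff_odd.mp ht)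

end RandomGraph

theorem stmt6_general (n k : ℕ) (hk : 1 ≤ k) :
    Ex (n := n) (fun g => Matrix.trace (Rmat g ^ (2 * k)))
      ≤ (((2 * k) ^ (2 * k - 2) * n ^ (k + 1) : ℕ) : ℝ) := by
  have hm : 0 < 2 * k := by omega
  calc Ex (fun g => (Rmat g ^ (2 * k)).trace)
      = ∑ w : Fin (2 * k) → Fin n, Ex (fun g => ∏ t, Rmat g (w t) (w (cyc t))) := by
        simp_rw [Matrix.trace_pow_eq_sum_prod_cyc _ hm]
        exact Ex_sum _ _
    _ ≤ ∑ w : Fin (2 * k) → Fin n, if IsEvenClosedWalk w then (1 : ℝ) else 0 :=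
        sum_le_sum fun w _ => Ex_prod_Rmat_cyc_le w
    _ = #{w : Fin (2 * k) → Fin n | IsEvenClosedWalk w} := by rw [sum_boole]
    _ ≤ _ := by
      have := card_filter_isEvenClosedWalk_le (α := Fin n) hm
      rw [Fintype.card_fin, show 2 * k / 2 + 1 = k + 1 by omega] at this
      exact_mod_cast this.trans_eq (mul_comm _ _)

theorem stmt6 (n k : ℕ) (hn : 1 ≤ n) (hk : 1 ≤ k) :
    Ex (n := n) (fun g => Matrix.trace (Rmat g ^ (2 * k)))
      ≤ (((2 * k) ^ (2 * k - 2) * n ^ (k + 1) : ℕ) : ℝ) :=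
  stmt6_general n k hk
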